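/- arXiv:1507.03726 — 3 statements merged into one kernel-verified Lean document; each statement's English description precedes it below -/
import Mathlib

section
/- For any group G, the subgroup C(G), defined as the intersection of the normalizers of the centralizers of all elements of G, is a 2-Engel group; that is, for all x in C(G) and all y in C(G), [[x,y],y] = 1. -/
/-- The norm of centralizers: intersection of normalizers of centralizers of all elements. -/
def normCent (G : Type*) [Group G] : Subgroup G :=
  ⨅ a : G, Subgroup.normalizer ((Subgroup.centralizer {a} : Subgroup G) : Set G)

theorem normCent_normal (G : Type*) [Group G] : (normCent G).Normal := by
  constructor
  intro n hn g
  simp only [normCent, Subgroup.mem_iInf] at hn ⊢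
  intro a
  rw [Subgroup.mem_normalizer_iff]
  intro h
  have h1 := Subgroup.mem_normalizer_iff.mp (hn (g⁻¹ * a * g)) (g⁻¹ * h * g)
  simp only [Subgroup.mem_centralizer_singleton_iff] at h1 ⊢
  constructor
  · intro hc
    have e0 : (g⁻¹ * h * g) * (g⁻¹ * a * g) = (g⁻¹ * a * g) * (g⁻¹ * h * g) := by
      calc (g⁻¹ * h * g) * (g⁻¹ * a * g) = g⁻¹ * (h * a) * g := by group
        _ = g⁻¹ * (a * h) * g := by rw [hc]
        _ = (g⁻¹ * a * g) * (g⁻¹ * h * g) := by group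
    have e1 := h1.mp e0
    calc g * n * g⁻¹ * h * (g * n * g⁻¹)⁻¹ * a
        = g * ((n * (g⁻¹ * h * g) * n⁻¹) * (g⁻¹*a*g)) * g⁻¹ := by group
      _ = g * ((g⁻¹*a*g) * (n * (g⁻¹ * h * g) * n⁻¹)) * g⁻¹ := by rw [e1]
      _ = a * (g * n * g⁻¹ * h * (g * n * g⁻¹)⁻¹) := by group
  · intro hc
    have e0 : (n * (g⁻¹ * h * g) * n⁻¹) * (g⁻¹*a*g) = (g⁻¹*a*g) * (n * (g⁻¹ * h * g) * n⁻¹) := by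
      calc (n * (g⁻¹ * h * g) * n⁻¹) * (g⁻¹*a*g)
          = g⁻¹ * ((g * n * g⁻¹ * h * (g * n * g⁻¹)⁻¹) * a) * g := by group
        _ = g⁻¹ * (a * (g * n * g⁻¹ * h * (g * n * g⁻¹)⁻¹)) * g := by rw [hc]
        _ = (g⁻¹*a*g) * (n * (g⁻¹ * h * g) * n⁻¹) := by group
    have e1 := h1.mpr e0
    calc h * a = g * ((g⁻¹*h*g) * (g⁻¹*a*g)) * g⁻¹ := by group
      _ = g * ((g⁻¹*a*g) * (g⁻¹*h*g)) * g⁻¹ := by rw [e1]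
      _ = a * h := by group

open scoped commutatorElement

theorem Subgroup.commute_commutatorElement_of_mem_normalizer_centralizer {G : Type*} [Group G]
    {x y : G} (hx : x ∈ normalizer ((centralizer {y} : Subgroup G) : Set G)) :
    Commute ⁅x, y⁆ y := by
  have hconj : x * y * x⁻¹ ∈ centralizer {y} :=
    (mem_normalizer_iff.mp hx y).mp (mem_centralizer_singleton_iff.mpr rfl)
  have hcomm : Commute (x * y * x⁻¹) y := mem_centralizer_singleton_iff.mp hconj
  rw [commutatorElement_def]
  exact hcomm.mul_left (Commute.refl y).inv_left

/-- `C(G)` is a 2-Engel group. -/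
theorem stmt0 (G : Type*) [Group G] :
    ∀ x ∈ normCent G, ∀ y ∈ normCent G, ⁅⁅x, y⁆, y⁆ = 1 := by
  intro x hx y _
  have hxy : x ∈ Subgroup.normalizer ((Subgroup.centralizer {y} : Subgroup G) : Set G) :=
    Subgroup.mem_iInf.mp hx y
  exact commutatorElement_eq_one_iff_commute.mpr
    (Subgroup.commute_commutatorElement_of_mem_normalizer_centralizer hxy)
end

section
/- For any group G, the subgroup C(G) = ⋂_{a∈G} N_G(C_G(a)) is solvable of derived length at most 2 (i.e., metabelian). -/
/-!
An element `a ∈ C(G)` normalises `C_G(b) ∋ b`, so `a * b * a⁻¹` commutes with `b`, that is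
`⁅⁅a, b⁆, b⁆ = 1`: `C(G)` is a 2-Engel group, and 2-Engel groups are metabelian (Levi).

In a 2-Engel group any two conjugates of an element commute, so the normal closure of each
element is abelian and `u ↦ ⁅g, u⁆` is a homomorphism on it. Linearizing `⁅g, ⁅g, u⁆⁆ = 1` in `g`
gives `⁅g, ⁅h, u⁆⁆ = ⁅h, ⁅g, u⁆⁆⁻¹`, so triple commutators are alternating; the Hall–Witt identity
then makes them of order dividing 3, while linearizing once more makes their commutators with any
element of order dividing 2. Hence `γ₃` is central, `⁅⁅x, y⁆, ·⁆` is a homomorphism into the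
centre, and it kills every commutator `⁅z, w⁆`.
-/

open scoped commutatorElement

section Group

variable {K : Type*} [Group K]

theorem Subgroup.Normal.commutatorElement_mem {N : Subgroup K} (hN : N.Normal) {u : K}
    (hu : u ∈ N) (g : K) : ⁅g, u⁆ ∈ N := by
  rw [commutatorElement_def]
  exact mul_mem (hN.conj_mem u hu g) (inv_mem hu)

theorem Subgroup.Normal.commutatorElement_mem_left {N : Subgroup K} (hN : N.Normal) {u : K}
    (hu : u ∈ N) (g : K) : ⁅u, g⁆ ∈ N := by
  rw [← commutatorElement_inv]
  exact inv_mem (hN.commutatorElement_mem hu g)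

theorem Subgroup.mem_normalClosure_singleton_self (x : K) : x ∈ Subgroup.normalClosure {x} :=
  Subgroup.subset_normalClosure rfl

theorem commutatorElement_mul_right_of_commute {a b c : K} (h : Commute b ⁅a, c⁆) :
    ⁅a, b * c⁆ = ⁅a, b⁆ * ⁅a, c⁆ := by
  rw [commutatorElement_mul_right_eq_mul_conj, mul_assoc _ b, h.eq, ← mul_assoc,
    mul_inv_cancel_right]

end Group

def IsTwoEngel (K : Type*) [Group K] : Prop :=
  ∀ a b : K, ⁅⁅a, b⁆, b⁆ = 1

namespace IsTwoEngel

variable {K : Type*} [Group K]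

theorem commute_commutatorElement (hK : IsTwoEngel K) (a b : K) : Commute ⁅a, b⁆ b :=
  commutatorElement_eq_one_iff_commute.mp (hK a b)

theorem commutatorElement_self_commutatorElement (hK : IsTwoEngel K) (g u : K) :
    ⁅g, ⁅g, u⁆⁆ = 1 := by
  have h := (hK.commute_commutatorElement u g).inv_left.symm
  rwa [commutatorElement_inv, ← commutatorElement_eq_one_iff_commute] at h

theorem commutatorElement_inv_left (hK : IsTwoEngel K) (p q : K) : ⁅p⁻¹, q⁆ = ⁅p, q⁆⁻¹ := by
  rw [_root_.commutatorElement_inv_left, mul_assoc, (hK.commute_commutatorElement q p).eq,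
    inv_mul_cancel_left, commutatorElement_inv]

theorem commutatorElement_inv_right (hK : IsTwoEngel K) (p q : K) : ⁅p, q⁻¹⁆ = ⁅p, q⁆⁻¹ := by
  have h : Commute ⁅q, p⁆ q := by
    simpa only [commutatorElement_inv] using (hK.commute_commutatorElement p q).inv_left
  rw [_root_.commutatorElement_inv_right, mul_assoc, h.eq, inv_mul_cancel_left,
    commutatorElement_inv]

theorem commute_conj (hK : IsTwoEngel K) (x g : K) : Commute x (g * x * g⁻¹) := by
  rw [← MulAut.conj_apply, conj_eq_commutatorElement_mul]
  exact (hK.commute_commutatorElement g x).symm.mul_right (Commute.refl x)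

theorem commute_of_mem_normalClosure (hK : IsTwoEngel K) {x u v : K}
    (hu : u ∈ Subgroup.normalClosure {x}) (hv : v ∈ Subgroup.normalClosure {x}) :
    Commute u v := by
  have hgen : ∀ p ∈ Group.conjugatesOfSet {x}, ∀ q ∈ Group.conjugatesOfSet {x},
      p * q = q * p := by
    intro p hp q hq
    simp only [Group.mem_conjugatesOfSet_iff, Set.mem_singleton_iff, exists_eq_left,
      isConj_iff] at hp hq
    obtain ⟨g, rfl⟩ := hp
    obtain ⟨h, rfl⟩ := hq
    have h_conj := (hK.commute_conj x (g⁻¹ * h)).map (MulAut.conj g)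
    rw [MulAut.conj_apply, MulAut.conj_apply,
      show g * (g⁻¹ * h * x * (g⁻¹ * h)⁻¹) * g⁻¹ = h * x * h⁻¹ by group] at h_conj
    exact h_conj.eq
  exact Set.centralizer_centralizer_comm_of_comm hgen u
    (Subgroup.closure_le_centralizer_centralizer _ hu) v
    (Subgroup.closure_le_centralizer_centralizer _ hv)

theorem commutatorElement_mul_right_of_mem (hK : IsTwoEngel K) {x u v : K}
    (hu : u ∈ Subgroup.normalClosure {x}) (hv : v ∈ Subgroup.normalClosure {x}) (g : K) :
    ⁅g, u * v⁆ = ⁅g, u⁆ * ⁅g, v⁆ :=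
  commutatorElement_mul_right_of_commute <| hK.commute_of_mem_normalClosure hu <|
    Subgroup.normalClosure_normal.commutatorElement_mem hv g

theorem commutatorElement_pow_right (hK : IsTwoEngel K) (g u : K) (n : ℕ) :
    ⁅g, u ^ n⁆ = ⁅g, u⁆ ^ n := by
  have hu := Subgroup.mem_normalClosure_singleton_self u
  induction n with
  | zero => simp
  | succ n ih =>
    rw [pow_succ, hK.commutatorElement_mul_right_of_mem (pow_mem hu n) hu, ih, pow_succ]

/-- The identity `⁅g * h, ⁅g * h, u⁆⁆ = 1`, expanded inside the abelian normal closure of `u`. -/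
theorem commutatorElement_linearized (hK : IsTwoEngel K) (g h u : K) :
    ⁅h, ⁅g, ⁅h, u⁆⁆⁆ * ⁅g, ⁅h, u⁆⁆ * ⁅h, ⁅g, u⁆⁆ = 1 := by
  have hN : (Subgroup.normalClosure {u}).Normal := Subgroup.normalClosure_normal
  have hu := Subgroup.mem_normalClosure_singleton_self u
  set v := ⁅h, u⁆
  have hv := hN.commutatorElement_mem hu h
  have hgu := hN.commutatorElement_mem hu g
  have hgvg := hN.conj_mem v hv g
  have expand : ∀ w, ⁅g * h, w⁆ = g * ⁅h, w⁆ * g⁻¹ * ⁅g, w⁆ := fun w => by group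
  have h_engel := hK.commutatorElement_self_commutatorElement (g * h) u
  rw [expand u, hK.commutatorElement_mul_right_of_mem hgvg hgu, expand, expand,
    show ⁅g, g * v * g⁻¹⁆ = g * ⁅g, v⁆ * g⁻¹ by group,
    ← MulAut.conj_apply g v, conj_eq_commutatorElement_mul,
    hK.commutatorElement_mul_right_of_mem (hN.commutatorElement_mem hv g) hv,
    hK.commutatorElement_self_commutatorElement h u,
    hK.commutatorElement_self_commutatorElement g u, mul_one, mul_one] at h_engel
  calc ⁅h, ⁅g, v⁆⁆ * ⁅g, v⁆ * ⁅h, ⁅g, u⁆⁆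
      = g⁻¹ * (g * ⁅h, ⁅g, v⁆⁆ * g⁻¹ * (g * ⁅g, v⁆ * g⁻¹) * (g * ⁅h, ⁅g, u⁆⁆ * g⁻¹)) * g := by
        group
    _ = 1 := by rw [h_engel]; group

theorem commutatorElement_commutatorElement_swap (hK : IsTwoEngel K) (g h u : K) :
    ⁅g, ⁅h, u⁆⁆ = ⁅h, ⁅g, u⁆⁆⁻¹ := by
  have hN : (Subgroup.normalClosure {u}).Normal := Subgroup.normalClosure_normal
  have hu := Subgroup.mem_normalClosure_singleton_self u
  have hB := hN.commutatorElement_mem (hN.commutatorElement_mem hu h) g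
  have hA := hN.commutatorElement_mem hB h
  have hC := hN.commutatorElement_mem (hN.commutatorElement_mem hu g) h
  have h_lin := hK.commutatorElement_linearized g h u
  -- applying `⁅h, ·⁆` to `h_lin` kills every factor but the first
  have h_first : ⁅h, ⁅g, ⁅h, u⁆⁆⁆ = 1 := by
    have := congrArg (⁅h, ·⁆) h_lin
    simpa only [hK.commutatorElement_mul_right_of_mem (mul_mem hA hB) hC,
      hK.commutatorElement_mul_right_of_mem hA hB, hK.commutatorElement_self_commutatorElement,
      commutatorElement_one_right, one_mul, mul_one] using this
  rw [h_first, one_mul] at h_lin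
  exact eq_inv_of_mul_eq_one_left h_lin

theorem commutatorElement_commutatorElement_eq (hK : IsTwoEngel K) (x y z : K) :
    ⁅⁅x, y⁆, z⁆ = ⁅z, ⁅y, x⁆⁆ := by
  rw [← commutatorElement_inv x y, hK.commutatorElement_inv_right, commutatorElement_inv]

theorem commutatorElement_commutatorElement_swap_left (hK : IsTwoEngel K) (x y z : K) :
    ⁅⁅y, x⁆, z⁆ = ⁅⁅x, y⁆, z⁆⁻¹ := by
  rw [← commutatorElement_inv x y, hK.commutatorElement_inv_left]

theorem commutatorElement_commutatorElement_swap_right (hK : IsTwoEngel K) (x y z : K) :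
    ⁅⁅x, z⁆, y⁆ = ⁅⁅x, y⁆, z⁆⁻¹ := by
  rw [hK.commutatorElement_commutatorElement_eq, hK.commutatorElement_commutatorElement_eq,
    hK.commutatorElement_commutatorElement_swap]

theorem commutatorElement_commutatorElement_rotate (hK : IsTwoEngel K) (x y z : K) :
    ⁅⁅y, z⁆, x⁆ = ⁅⁅x, y⁆, z⁆ := by
  rw [hK.commutatorElement_commutatorElement_swap_right,
    hK.commutatorElement_commutatorElement_swap_left, inv_inv]

theorem commute_self_commutatorElement_commutatorElement (hK : IsTwoEngel K) (x y z : K) :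
    Commute x ⁅⁅x, y⁆, z⁆ := by
  have hN : (Subgroup.normalClosure {x}).Normal := Subgroup.normalClosure_normal
  have hx := Subgroup.mem_normalClosure_singleton_self x
  exact hK.commute_of_mem_normalClosure hx <|
    hN.commutatorElement_mem_left (hN.commutatorElement_mem_left hx y) z

theorem commutatorElement_commutatorElement_pow_three (hK : IsTwoEngel K) (x y z : K) :
    ⁅⁅x, y⁆, z⁆ ^ 3 = 1 := by
  have h_conj : ∀ a b c : K, a * ⁅⁅a⁻¹, b⁆, c⁆ * a⁻¹ = ⁅⁅a, b⁆, c⁆⁻¹ := fun a b c => by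
    rw [hK.commutatorElement_inv_left, hK.commutatorElement_inv_left,
      (hK.commute_self_commutatorElement_commutatorElement a b c).inv_right.eq,
      mul_inv_cancel_right]
  -- the Hall–Witt identity, whose three factors all equal `⁅⁅x, y⁆, z⁆⁻¹`
  have h_hw := conj_commutatorElement_left_commutatorElement_mul x y z
  rw [← inv_eq_one, ← inv_pow, pow_three']
  calc ⁅⁅x, y⁆, z⁆⁻¹ * ⁅⁅x, y⁆, z⁆⁻¹ * ⁅⁅x, y⁆, z⁆⁻¹
      = x * ⁅⁅x⁻¹, y⁆, z⁆ * x⁻¹ * (z * ⁅⁅z⁻¹, x⁆, y⁆ * z⁻¹) * (y * ⁅⁅y⁻¹, z⁆, x⁆ * y⁻¹) := by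
        rw [h_conj, h_conj, h_conj, hK.commutatorElement_commutatorElement_rotate y z x,
          hK.commutatorElement_commutatorElement_rotate x y z]
    _ = 1 := by simpa only [mul_assoc] using h_hw

theorem commutatorElement_commutatorElement_commutatorElement_sq (hK : IsTwoEngel K)
    (x y z w : K) : ⁅w, ⁅z, ⁅y, x⁆⁆⁆ ^ 2 = 1 := by
  have hN : (Subgroup.normalClosure {x}).Normal := Subgroup.normalClosure_normal
  have hx := Subgroup.mem_normalClosure_singleton_self x
  have expand : ∀ a b c : K, ⁅a * b, c⁆ = ⁅a, ⁅b, c⁆⁆ * ⁅b, c⁆ * ⁅a, c⁆ := fun a b c => by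
    rw [commutatorElement_mul_left_eq_conj_mul, ← MulAut.conj_apply,
      conj_eq_commutatorElement_mul]
  set T := ⁅w, ⁅z, ⁅y, x⁆⁆⁆
  set a := ⁅z, ⁅y, x⁆⁆
  set b := ⁅w, ⁅y, x⁆⁆
  have hyx := hN.commutatorElement_mem hx y
  have hzx := hN.commutatorElement_mem hx z
  have hwzx := hN.commutatorElement_mem hzx w
  have ha : a ∈ _ := hN.commutatorElement_mem hyx z
  have hb : b ∈ _ := hN.commutatorElement_mem hyx w
  have hT : T ∈ _ := hN.commutatorElement_mem ha w
  -- expanding the swap identity for `w * z`, `y` leaves `T * a * b = b * a * T⁻¹`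
  have h_swap := hK.commutatorElement_commutatorElement_swap (w * z) y x
  rw [expand, expand, hK.commutatorElement_mul_right_of_mem (mul_mem hwzx hzx)
      (hN.commutatorElement_mem hx w), hK.commutatorElement_mul_right_of_mem hwzx hzx,
    hK.commutatorElement_commutatorElement_swap y w,
    hK.commutatorElement_commutatorElement_swap y z,
    hK.commutatorElement_commutatorElement_swap y w] at h_swap
  simp only [hK.commutatorElement_inv_right, mul_inv_rev, inv_inv] at h_swap
  have hab : Commute a b := hK.commute_of_mem_normalClosure ha hb
  have hTab : Commute T (a * b) := hK.commute_of_mem_normalClosure hT (mul_mem ha hb)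
  rw [mul_assoc, hTab.eq, ← mul_assoc b, ← hab.eq] at h_swap
  rw [sq, mul_eq_one_iff_eq_inv]
  exact mul_left_cancel h_swap

theorem commutatorElement_commutatorElement_commutatorElement_eq_one (hK : IsTwoEngel K)
    (x y z w : K) : ⁅w, ⁅⁅x, y⁆, z⁆⁆ = 1 := by
  have h_sq := hK.commutatorElement_commutatorElement_commutatorElement_sq x y z w
  have h_cube : ⁅w, ⁅⁅x, y⁆, z⁆⁆ ^ 3 = 1 := by
    rw [← hK.commutatorElement_pow_right, hK.commutatorElement_commutatorElement_pow_three,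
      commutatorElement_one_right]
  rw [← hK.commutatorElement_commutatorElement_eq x y z] at h_sq
  exact (pow_eq_one_iff_of_coprime (by norm_num)).mp ⟨h_sq, h_cube⟩

theorem commute_commutatorElement_commutatorElement (hK : IsTwoEngel K) (x y z w : K) :
    Commute ⁅x, y⁆ ⁅z, w⁆ := by
  set c := ⁅x, y⁆
  have h_central : ∀ s t : K, Commute t ⁅c, s⁆ := fun s t =>
    commutatorElement_eq_one_iff_commute.mp
      (hK.commutatorElement_commutatorElement_commutatorElement_eq_one x y s t)
  have h_mul : ∀ s t : K, ⁅c, s * t⁆ = ⁅c, s⁆ * ⁅c, t⁆ := fun s t =>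
    commutatorElement_mul_right_of_commute (h_central t s)
  rw [← commutatorElement_eq_one_iff_commute, commutatorElement_def z w, h_mul, h_mul, h_mul,
    hK.commutatorElement_inv_right, hK.commutatorElement_inv_right, mul_assoc ⁅c, z⁆,
    (h_central w ⁅c, z⁆⁻¹).symm.eq]
  group

theorem derivedSeries_two_eq_bot (hK : IsTwoEngel K) : derivedSeries K 2 = ⊥ := by
  rw [derivedSeries_succ, derivedSeries_one, Subgroup.commutator_eq_bot_iff_le_centralizer,
    commutator_eq_closure, Subgroup.centralizer_closure, Subgroup.closure_le]
  rintro _ ⟨x, y, rfl⟩ _ ⟨z, w, rfl⟩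
  exact (hK.commute_commutatorElement_commutatorElement z w x y).eq

end IsTwoEngel

theorem commutatorElement_commutatorElement_eq_one_of_mem_normCent {G : Type*} [Group G]
    {a : G} (ha : a ∈ normCent G) (b : G) : ⁅⁅a, b⁆, b⁆ = 1 := by
  have hb : b ∈ Subgroup.centralizer {b} := Subgroup.mem_centralizer_singleton_iff.mpr rfl
  have hab : Commute (a * b * a⁻¹) b := Subgroup.mem_centralizer_singleton_iff.mp <|
    (Subgroup.mem_normalizer_iff.mp (Subgroup.mem_iInf.mp ha b) b).mp hb
  rw [commutatorElement_eq_one_iff_commute, commutatorElement_def]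
  exact hab.mul_left (Commute.refl b).inv_left

theorem isTwoEngel_normCent (G : Type*) [Group G] : IsTwoEngel (normCent G) := fun a b =>
  (normCent G).subtype_injective <| by
    rw [map_commutatorElement, map_commutatorElement, map_one]
    exact commutatorElement_commutatorElement_eq_one_of_mem_normCent a.2 b

/-- `C(G)` is solvable of derived length at most 2 (metabelian). -/
theorem stmt3 (G : Type*) [Group G] :
    derivedSeries (↥(normCent G)) 2 = ⊥ :=
  (isTwoEngel_normCent G).derivedSeries_two_eq_bot
end

section
/- For any dihedral group G = D_n and any i ≥ 0, C_i(G) = Z_{2i}(G), where C_i is the iterated norm-of-centralizers series and Z_j the upper central series. -/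
/-- The ascending series of norms of centralizers, bundled with normality. -/
def CSeriesAux (G : Type*) [Group G] : ℕ → {H : Subgroup G // H.Normal}
  | 0 => ⟨⊥, inferInstance⟩
  | (i+1) =>
    let p := CSeriesAux G i
    haveI := p.2
    ⟨(normCent (G ⧸ p.1)).comap (QuotientGroup.mk' p.1),
      Subgroup.Normal.comap (normCent_normal _) _⟩

/-- `CSeries G i` = `C_i(G)`: `C_0 = 1` and `C_{i+1}(G)/C_i(G) = C(G/C_i(G))`. -/
def CSeries (G : Type*) [Group G] (n : ℕ) : Subgroup G := (CSeriesAux G n).1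

instance CSeries_normal (G : Type*) [Group G] (n : ℕ) : (CSeries G n).Normal :=
  (CSeriesAux G n).2

open scoped commutatorElement

theorem CSeries_zero (G : Type*) [Group G] : CSeries G 0 = ⊥ :=
  rfl

theorem CSeries_succ (G : Type*) [Group G] (i : ℕ) :
    CSeries G (i + 1) = (normCent (G ⧸ CSeries G i)).comap (QuotientGroup.mk' (CSeries G i)) :=
  rfl

theorem upperCentralSeries_succ_eq_upperCentralSeriesStep (G : Type*) [Group G] (j : ℕ) :
    Subgroup.upperCentralSeries G (j + 1) =
      Subgroup.upperCentralSeriesStep (Subgroup.upperCentralSeries G j) :=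
  rfl

theorem mem_comap_normCent_iff {G : Type*} [Group G] (H : Subgroup G) [H.Normal] (g : G) :
    g ∈ (normCent (G ⧸ H)).comap (QuotientGroup.mk' H) ↔
      ∀ a h : G, ⁅a, h⁆ ∈ H ↔ ⁅a, g * h * g⁻¹⁆ ∈ H := by
  have commute_iff (a h : G) : ((h * a : G) : G ⧸ H) = (a * h : G) ↔ ⁅a, h⁆ ∈ H := by
    rw [eq_comm, QuotientGroup.mk_mul, QuotientGroup.mk_mul,
      ← commutatorElement_eq_one_iff_mul_comm, ← QuotientGroup.mk'_apply,
      ← QuotientGroup.mk'_apply, ← map_commutatorElement, QuotientGroup.mk'_apply,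
      QuotientGroup.eq_one_iff]
  simp only [Subgroup.mem_comap, normCent, Subgroup.mem_iInf, Subgroup.mem_normalizer_iff,
    Subgroup.mem_centralizer_singleton_iff, QuotientGroup.mk_surjective.forall,
    QuotientGroup.mk'_apply, ← QuotientGroup.mk_inv, ← QuotientGroup.mk_mul, commute_iff]

namespace DihedralGroup

variable {n : ℕ}

@[simp] theorem commutatorElement_r_r (a b : ZMod n) : ⁅r a, r b⁆ = 1 := by
  simp [commutatorElement_def]

@[simp] theorem commutatorElement_r_sr (a b : ZMod n) : ⁅r a, sr b⁆ = r (2 * a) := by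
  simp [commutatorElement_def]; ring

@[simp] theorem commutatorElement_sr_r (a b : ZMod n) : ⁅sr a, r b⁆ = r (-(2 * b)) := by
  simp [commutatorElement_def]; ring

@[simp] theorem commutatorElement_sr_sr (a b : ZMod n) : ⁅sr a, sr b⁆ = r (2 * (b - a)) := by
  simp [commutatorElement_def]; ring

def annihSubgroup (m : ZMod n) : Subgroup (DihedralGroup n) where
  carrier := {g | match g with | r x => m * x = 0 | sr _ => m = 0}
  one_mem' := mul_zero m
  mul_mem' := by
    rintro (x | x) (y | y) hx hy <;> simp_all [mul_add]
  inv_mem' := by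
    rintro (x | x) hx <;> simp_all

@[simp] theorem mem_annihSubgroup_r {m x : ZMod n} : r x ∈ annihSubgroup m ↔ m * x = 0 :=
  Iff.rfl

@[simp] theorem mem_annihSubgroup_sr {m y : ZMod n} : sr y ∈ annihSubgroup m ↔ m = 0 :=
  Iff.rfl

instance annihSubgroup_normal (m : ZMod n) : (annihSubgroup m).Normal where
  conj_mem := by
    rintro (x | x) hx (g | g) <;> simp_all

section Step

variable {H : Subgroup (DihedralGroup n)} [H.Normal] {m : ZMod n}

theorem upperCentralSeriesStep_eq_annihSubgroup (hH : ∀ u, r u ∈ H ↔ m * u = 0) :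
    Subgroup.upperCentralSeriesStep H = annihSubgroup (2 * m) := by
  ext (x | y) <;> simp only [Subgroup.mem_upperCentralSeriesStep]
  · refine ⟨fun h => ?_, fun hx => ?_⟩
    · have := h (sr 0)
      rw [commutatorElement_r_sr, hH] at this
      rw [mem_annihSubgroup_r]
      linear_combination this
    · rintro (b | b) <;> simp only [commutatorElement_r_r, commutatorElement_r_sr, H.one_mem, hH]
      simp only [mem_annihSubgroup_r] at hx
      linear_combination hx
  · refine ⟨fun h => ?_, fun hm => ?_⟩
    · have := h (r (-1))
      rw [commutatorElement_sr_r, hH] at this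
      rw [mem_annihSubgroup_sr]
      linear_combination this
    · rw [mem_annihSubgroup_sr] at hm
      rintro (b | b) <;> simp only [commutatorElement_sr_r, commutatorElement_sr_sr, hH]
      · linear_combination -b * hm
      · linear_combination (b - y) * hm

theorem comap_normCent_eq_annihSubgroup (hH : ∀ u, r u ∈ H ↔ m * u = 0) :
    (normCent (DihedralGroup n ⧸ H)).comap (QuotientGroup.mk' H) = annihSubgroup (4 * m) := by
  -- Conjugation by `r x` moves `sr c` to `sr (c - 2 x)`, and by `sr y` moves `sr c` to
  -- `sr (2 y - c)`: a commutator `⁅sr b, sr c⁆` changes by `r (-4 x)`, resp. `r (4 (y - c))`.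
  ext (x | y) <;> rw [mem_comap_normCent_iff]
  · refine ⟨fun h => ?_, fun hx => ?_⟩
    · have := (h (sr 0) (sr 0)).1 (by simp)
      simp only [hH, commutatorElement_sr_sr, r_mul_sr, sr_mul_r, inv_r] at this
      rw [mem_annihSubgroup_r]
      linear_combination -this
    · rintro (b | b) (c | c) <;> simp [hH] at hx ⊢
      rw [show m * (2 * (c - x + -x - b)) = m * (2 * (c - b)) - 4 * m * x by ring, hx, sub_zero]
  · refine ⟨fun h => ?_, fun hm => ?_⟩
    · have := (h (sr (y - 1)) (sr (y - 1))).1 (by simp)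
      simp only [hH, commutatorElement_sr_sr, sr_mul_sr, r_mul_sr, inv_sr] at this
      rw [mem_annihSubgroup_sr]
      linear_combination this
    · rintro (b | b) (c | c) <;> simp [hH] at hm ⊢
      rw [show m * (2 * (y - (c - y) - b)) = m * (2 * (c - b)) + 4 * m * (y - c) by ring, hm,
        zero_mul, add_zero]

end Step

theorem r_mem_upperCentralSeries_iff (j : ℕ) (u : ZMod n) :
    r u ∈ Subgroup.upperCentralSeries (DihedralGroup n) j ↔ 2 ^ j * u = 0 := by
  induction j generalizing u with
  | zero => rw [pow_zero, one_mul, Subgroup.upperCentralSeries_zero, Subgroup.mem_bot, ← r_zero,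
      r.injEq]
  | succ j ih =>
    rw [upperCentralSeries_succ_eq_upperCentralSeriesStep,
      upperCentralSeriesStep_eq_annihSubgroup ih, mem_annihSubgroup_r, pow_succ']

theorem r_mem_CSeries_iff (i : ℕ) (u : ZMod n) :
    r u ∈ CSeries (DihedralGroup n) i ↔ 4 ^ i * u = 0 := by
  induction i generalizing u with
  | zero => rw [pow_zero, one_mul, CSeries_zero, Subgroup.mem_bot, ← r_zero, r.injEq]
  | succ i ih => rw [CSeries_succ, comap_normCent_eq_annihSubgroup ih, mem_annihSubgroup_r, pow_succ']

theorem upperCentralSeries_succ_eq_annihSubgroup (j : ℕ) :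
    Subgroup.upperCentralSeries (DihedralGroup n) (j + 1) = annihSubgroup (2 ^ (j + 1)) := by
  rw [upperCentralSeries_succ_eq_upperCentralSeriesStep,
    upperCentralSeriesStep_eq_annihSubgroup (r_mem_upperCentralSeries_iff j), pow_succ']

theorem CSeries_succ_eq_annihSubgroup (i : ℕ) :
    CSeries (DihedralGroup n) (i + 1) = annihSubgroup (4 ^ (i + 1)) := by
  rw [CSeries_succ, comap_normCent_eq_annihSubgroup (r_mem_CSeries_iff i), pow_succ']

end DihedralGroup

/-- For any dihedral group, `C_i(G) = Z_{2i}(G)` for all `i ≥ 0`. -/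
theorem stmt19 (n : ℕ) (i : ℕ) :
    CSeries (DihedralGroup n) i = upperCentralSeries (DihedralGroup n) (2 * i) := by
  cases i with
  | zero => rfl
  | succ i =>
    calc CSeries (DihedralGroup n) (i + 1)
        = DihedralGroup.annihSubgroup (4 ^ (i + 1)) := DihedralGroup.CSeries_succ_eq_annihSubgroup i
      _ = DihedralGroup.annihSubgroup (2 ^ (2 * i + 1 + 1)) := by
        rw [show 2 * i + 1 + 1 = 2 * (i + 1) by ring, pow_mul]
        norm_num
      _ = Subgroup.upperCentralSeries (DihedralGroup n) (2 * (i + 1)) :=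
        (DihedralGroup.upperCentralSeries_succ_eq_annihSubgroup (2 * i + 1)).symm
end
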